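/- Semigroup property of the fractional Laplacian: for Schwartz u on ℝⁿ and s, t > 0 with s + t ≤ 1, (-Δ)^s((-Δ)^t u) = (-Δ)^{s+t} u as tempered distributions, where each power is defined as the Fourier multiplier with symbol |ξ|^{2s}, noting that the multipliers |ξ|^{2s} have polynomial growth so the compositions are well defined. -/

import Mathlib

open MeasureTheory Real

/-- Fractional Laplacian `(-Δ)^r u = 𝓕⁻¹(|ξ|^{2r} 𝓕u)` of a Schwartz function. -/
noncomputable def fracLap {n : ℕ} (r : ℝ)
    (u : SchwartzMap (EuclideanSpace ℝ (Fin n)) ℂ)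
    (x : EuclideanSpace ℝ (Fin n)) : ℂ :=
  FourierTransformInv.fourierInv
    (fun ξ => ((‖ξ‖ ^ (2 * r) : ℝ) : ℂ) * FourierTransform.fourier (fun y => u y) ξ) x

open FourierTransform Filter Complex
open scoped RealInnerProductSpace ENNReal NNReal Topology

noncomputable section FracLapAux

namespace FracLapAux

variable {V : Type*} [NormedAddCommGroup V] [InnerProductSpace ℝ V]
  [MeasurableSpace V] [BorelSpace V] [FiniteDimensional ℝ V]

lemma ofReal_norm_eq_coe_nnnorm {E : Type*} [SeminormedAddCommGroup E] (a : E) :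
    ENNReal.ofReal ‖a‖ = (‖a‖₊ : ℝ≥0∞) := ofReal_norm a

/-- The Gaussian kernel appearing as Fourier transform of `exp (-c⁻¹ ‖x‖²)`. -/
def K (c : ℝ) (y : V) : ℂ :=
  (π * c : ℂ) ^ (Module.finrank ℝ V / 2 : ℂ) * Complex.exp (-π ^ 2 * c * ‖y‖ ^ 2)

lemma K_eq_ofReal {c : ℝ} (hc : 0 < c) (y : V) :
    K c y = (((π * c) ^ ((Module.finrank ℝ V : ℝ) / 2) *
      rexp (-π ^ 2 * c * ‖y‖ ^ 2) : ℝ) : ℂ) := by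
  rw [K]
  rw [show ((π : ℂ) * c) = ((π * c : ℝ) : ℂ) by push_cast; ring]
  rw [show ((Module.finrank ℝ V : ℂ) / 2)
      = (((Module.finrank ℝ V : ℝ) / 2 : ℝ) : ℂ) by push_cast; ring]
  rw [← Complex.ofReal_cpow (by positivity)]
  rw [show (-(π : ℂ) ^ 2 * c * (‖y‖ : ℂ) ^ 2)
      = ((-π ^ 2 * c * ‖y‖ ^ 2 : ℝ) : ℂ) by push_cast; ring]
  rw [← Complex.ofReal_exp, ← Complex.ofReal_mul]

lemma norm_K {c : ℝ} (hc : 0 < c) (y : V) :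
    ‖K c y‖ = (π * c) ^ ((Module.finrank ℝ V : ℝ) / 2) * rexp (-π ^ 2 * c * ‖y‖ ^ 2) := by
  rw [K_eq_ofReal hc, Complex.norm_real, Real.norm_eq_abs]
  exact abs_of_nonneg (by positivity)

lemma continuous_K {c : ℝ} : Continuous (K c : V → ℂ) := by
  apply continuous_const.mul
  apply Complex.continuous_exp.comp
  continuity

lemma integrable_gauss_cexp {b : ℝ} (hb : 0 < b) :
    Integrable (fun x : V ↦ Complex.exp (-(b : ℂ) * ‖x‖ ^ 2)) := by
  have h := GaussianFourier.integrable_cexp_neg_mul_sq_norm_add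
    (b := ((b : ℝ) : ℂ)) (by simpa using hb) 0 (0 : V)
  simpa using h

lemma integrable_gauss_rexp {b : ℝ} (hb : 0 < b) :
    Integrable (fun x : V ↦ rexp (-b * ‖x‖ ^ 2)) := by
  have h := (integrable_gauss_cexp (V := V) hb).norm
  refine h.congr (Eventually.of_forall fun x ↦ ?_)
  dsimp only
  rw [show (-(b : ℂ) * (‖x‖ : ℂ) ^ 2) = ((-b * ‖x‖ ^ 2 : ℝ) : ℂ) by push_cast; ring,
    ← Complex.ofReal_exp, Complex.norm_real, Real.norm_of_nonneg (Real.exp_pos _).le]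

lemma integrable_K {c : ℝ} (hc : 0 < c) : Integrable (K c : V → ℂ) := by
  have h0 : Integrable (fun y : V ↦
      (π * c) ^ ((Module.finrank ℝ V : ℝ) / 2) * rexp (-π ^ 2 * c * ‖y‖ ^ 2)) := by
    have := (integrable_gauss_rexp (V := V) (b := π ^ 2 * c) (by positivity)).const_mul
      ((π * c) ^ ((Module.finrank ℝ V : ℝ) / 2))
    refine this.congr (Eventually.of_forall fun y ↦ ?_)
    dsimp only
    ring_nf
  exact h0.ofReal.congr (Eventually.of_forall fun y ↦ (K_eq_ofReal hc y).symm)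

lemma integral_norm_K {c : ℝ} (hc : 0 < c) : ∫ y : V, ‖K c y‖ = 1 := by
  have h1 : ∫ y : V, rexp (-(π ^ 2 * c) * ‖y‖ ^ 2) =
      (π / (π ^ 2 * c)) ^ ((Module.finrank ℝ V : ℝ) / 2) := by
    simpa using GaussianFourier.integral_rexp_neg_mul_sq_norm (V := V)
      (b := π ^ 2 * c) (by positivity)
  have h2 : ∀ y : V, ‖K c y‖ =
      (π * c) ^ ((Module.finrank ℝ V : ℝ) / 2) * rexp (-(π ^ 2 * c) * ‖y‖ ^ 2) := by
    intro y
    rw [norm_K hc]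
    ring_nf
  rw [integral_congr_ae (Eventually.of_forall h2), integral_const_mul, h1,
    ← Real.mul_rpow (by positivity) (by positivity)]
  rw [show π * c * (π / (π ^ 2 * c)) = 1 by field_simp]
  exact Real.one_rpow _

lemma lintegral_nnnorm_K {c : ℝ} (hc : 0 < c) :
    ∫⁻ y : V, (‖K c y‖₊ : ℝ≥0∞) = 1 := by
  have h := ofReal_integral_eq_lintegral_ofReal (integrable_K (V := V) hc).norm
    (Eventually.of_forall fun y ↦ norm_nonneg _)
  rw [integral_norm_K hc] at h
  rw [show (1 : ℝ≥0∞) = ENNReal.ofReal 1 by simp, h]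
  exact lintegral_congr fun y ↦ (ofReal_norm_eq_coe_nnnorm _).symm

/-- flip lemma for real Fourier transform. -/
lemma flip_mul {f g : V → ℂ} (hf : Integrable f) (hg : Integrable g) :
    ∫ ξ, 𝓕 f ξ * g ξ = ∫ x, f x * 𝓕 g x := by
  have hL : (innerₗ V).flip = innerₗ V := by
    apply LinearMap.ext; intro x; apply LinearMap.ext; intro y
    exact real_inner_comm x y
  have h := VectorFourier.integral_fourierIntegral_smul_eq_flip (L := innerₗ V)
    Real.continuous_fourierChar continuous_inner hf hg
  rw [hL] at h
  simp only [smul_eq_mul] at h; exact h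

lemma fourier_K {c : ℝ} (hc : 0 < c) (ξ η : V) :
    𝓕 (fun x : V ↦ (𝐞 (-⟪x, ξ⟫) : ℂ) * Complex.exp (-(c : ℂ)⁻¹ * ‖x‖ ^ 2)) η
      = K c (ξ + η) := by
  have hb : (0 : ℝ) < ((c⁻¹ : ℝ) : ℂ).re := by simpa using inv_pos.2 hc
  have h := fourier_gaussian_innerProductSpace' (b := ((c⁻¹ : ℝ) : ℂ)) hb (-ξ) η
  have hfun : (fun v : V ↦ Complex.exp (-((c⁻¹ : ℝ) : ℂ) * ‖v‖ ^ 2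
        + 2 * π * Complex.I * ⟪-ξ, v⟫))
      = fun x : V ↦ (𝐞 (-⟪x, ξ⟫) : ℂ) * Complex.exp (-(c : ℂ)⁻¹ * ‖x‖ ^ 2) := by
    funext x
    rw [Complex.exp_add, Real.fourierChar_apply, inner_neg_left, real_inner_comm]
    push_cast
    ring_nf
  rw [hfun] at h
  rw [h, K]
  have hc0 : (c : ℂ) ≠ 0 := by exact_mod_cast hc.ne'
  have hne : ‖-ξ - η‖ = ‖ξ + η‖ := by
    rw [show -ξ - η = -(ξ + η) by abel, norm_neg]
  rw [hne]
  congr 1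
  · congr 1
    push_cast
    field_simp
  · push_cast
    field_simp

lemma integrable_gauss_mul_bdd {c : ℝ} (hc : 0 < c) {g : V → ℂ}
    (hmeas : AEStronglyMeasurable g (volume : Measure V)) {M : ℝ} (hbdd : ∀ x, ‖g x‖ ≤ M) :
    Integrable (fun x : V ↦ g x * Complex.exp (-(c : ℂ)⁻¹ * ‖x‖ ^ 2)) := by
  have hg : Integrable (fun x : V ↦ Complex.exp (-(c : ℂ)⁻¹ * ‖x‖ ^ 2)) := by
    have := integrable_gauss_cexp (V := V) (b := c⁻¹) (inv_pos.2 hc)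
    refine this.congr (Eventually.of_forall fun x ↦ ?_)
    push_cast
    ring_nf
  exact hg.bdd_mul hmeas (Eventually.of_forall hbdd)

/-- The key pointwise Fubini identity. -/
lemma key2 {G : V → ℂ} (hG : Integrable G) {c : ℝ} (hc : 0 < c) (ξ : V) :
    𝓕 (fun x : V ↦ Complex.exp (-(c : ℂ)⁻¹ * ‖x‖ ^ 2) * 𝓕 G x) ξ
      = ∫ η, G η * K c (ξ + η) := by
  have h𝓕G : ∀ x, ‖𝓕 G x‖ ≤ ∫ η, ‖G η‖ := fun x ↦
    VectorFourier.norm_fourierIntegral_le_integral_norm _ _ _ _ _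
  have h𝓕Gc : Continuous (𝓕 G) :=
    VectorFourier.fourierIntegral_continuous Real.continuous_fourierChar continuous_inner hG
  have step : 𝓕 (fun x : V ↦ Complex.exp (-(c : ℂ)⁻¹ * ‖x‖ ^ 2) * 𝓕 G x) ξ
      = ∫ x, 𝓕 G x * ((𝐞 (-⟪x, ξ⟫) : ℂ) * Complex.exp (-(c : ℂ)⁻¹ * ‖x‖ ^ 2)) := by
    rw [Real.fourier_eq]
    refine integral_congr_ae (Eventually.of_forall fun x ↦ ?_)
    dsimp only
    rw [Circle.smul_def, smul_eq_mul]
    ring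
  rw [step]
  have hh : Integrable (fun x : V ↦ (𝐞 (-⟪x, ξ⟫) : ℂ) * Complex.exp (-(c : ℂ)⁻¹ * ‖x‖ ^ 2)) := by
    refine integrable_gauss_mul_bdd hc (Continuous.aestronglyMeasurable ?_) (M := 1)
      (fun x ↦ le_of_eq (by exact Circle.norm_coe _))
    exact continuous_subtype_val.comp
      (Real.continuous_fourierChar.comp ((continuous_id.inner continuous_const).neg))
  rw [flip_mul hG hh]
  refine integral_congr_ae (Eventually.of_forall fun η ↦ ?_)
  dsimp only
  rw [fourier_K hc ξ η]

/-- The key integral identity obtained from two flips. -/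
lemma key {F G : V → ℂ} (hF : Integrable F) (hG : Integrable G) {c : ℝ} (hc : 0 < c) :
    ∫ x, Complex.exp (-(c : ℂ)⁻¹ * ‖x‖ ^ 2) * (𝓕⁻ F x * 𝓕⁻ G x)
      = ∫ ξ, F ξ * ∫ η, G η * K c (ξ + η) := by
  have h𝓕Gc : Continuous (𝓕 G) :=
    VectorFourier.fourierIntegral_continuous Real.continuous_fourierChar continuous_inner hG
  have step1 : ∫ x, Complex.exp (-(c : ℂ)⁻¹ * ‖x‖ ^ 2) * (𝓕⁻ F x * 𝓕⁻ G x)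
      = ∫ x, 𝓕 F x * (Complex.exp (-(c : ℂ)⁻¹ * ‖x‖ ^ 2) * 𝓕 G x) := by
    rw [← integral_neg_eq_self
      (fun x ↦ 𝓕 F x * (Complex.exp (-(c : ℂ)⁻¹ * ‖x‖ ^ 2) * 𝓕 G x)) volume]
    refine integral_congr_ae (Eventually.of_forall fun x ↦ ?_)
    dsimp only
    rw [norm_neg, ← Real.fourierInv_eq_fourier_neg,
      ← Real.fourierInv_eq_fourier_neg]
    ring
  have hgG : Integrable (fun x : V ↦ Complex.exp (-(c : ℂ)⁻¹ * ‖x‖ ^ 2) * 𝓕 G x) := by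
    have := integrable_gauss_mul_bdd hc h𝓕Gc.aestronglyMeasurable
      (M := ∫ η, ‖G η‖)
      (fun x ↦ VectorFourier.norm_fourierIntegral_le_integral_norm _ _ _ _ _)
    refine this.congr (Eventually.of_forall fun x ↦ by ring)
  rw [step1, flip_mul hF hgG]
  refine integral_congr_ae (Eventually.of_forall fun ξ ↦ ?_)
  dsimp only
  rw [key2 hG hc ξ]

lemma norm_integral_mul_K_le {G : V → ℂ} (hG : Integrable G) {M : ℝ}
    (hGb : ∀ η, ‖G η‖ ≤ M) {c : ℝ} (hc : 0 < c) (ξ : V) :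
    ‖∫ η, G η * K c (ξ + η)‖ ≤ M := by
  have hKt : Integrable (fun η : V ↦ K c (ξ + η)) := (integrable_K hc).comp_add_left ξ
  have hGK : Integrable (fun η : V ↦ G η * K c (ξ + η)) :=
    hKt.bdd_mul hG.aestronglyMeasurable (Eventually.of_forall hGb)
  calc ‖∫ η, G η * K c (ξ + η)‖ ≤ ∫ η, ‖G η * K c (ξ + η)‖ :=
        norm_integral_le_integral_norm _
    _ ≤ ∫ η, M * ‖K c (ξ + η)‖ := by
        refine integral_mono hGK.norm (hKt.norm.const_mul M) fun η ↦ ?_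
        rw [norm_mul]
        exact mul_le_mul_of_nonneg_right (hGb η) (norm_nonneg _)
    _ = M * ∫ η, ‖K c (ξ + η)‖ := integral_const_mul _ _
    _ = M := by
        rw [integral_add_left_eq_self (fun η : V ↦ ‖K c η‖) ξ, integral_norm_K hc, mul_one]

lemma conj_fourierIntegralInv (F : V → ℂ) (x : V) :
    (starRingEnd ℂ) (𝓕⁻ F x) = 𝓕⁻ (fun η ↦ (starRingEnd ℂ) (F (-η))) x := by
  rw [Real.fourierInv_eq, Real.fourierInv_eq, ← integral_conj,
    ← integral_neg_eq_self (fun η ↦ 𝐞 ⟪η, x⟫ • (starRingEnd ℂ) (F (-η))) volume]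
  refine integral_congr_ae (Eventually.of_forall fun η ↦ ?_)
  dsimp only
  rw [Circle.smul_def, Circle.smul_def, smul_eq_mul, smul_eq_mul, map_mul, neg_neg,
    inner_neg_left]
  congr 1
  rw [Real.fourierChar_apply, Real.fourierChar_apply, ← Complex.exp_conj]
  congr 1
  rw [map_mul, Complex.conj_I, Complex.conj_ofReal]
  push_cast
  ring

lemma ennreal_mul_le_sq_add_sq (a b : ℝ≥0∞) : a * b ≤ a ^ 2 + b ^ 2 := by
  rcases le_total a b with h | h
  · calc a * b ≤ b * b := mul_le_mul_left h b
      _ = b ^ 2 := (sq b).symm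
      _ ≤ a ^ 2 + b ^ 2 := le_add_self
  · calc a * b ≤ a * a := mul_le_mul_right h a
      _ = a ^ 2 := (sq a).symm
      _ ≤ a ^ 2 + b ^ 2 := le_self_add

theorem memL2_fourierIntegralInv {F : V → ℂ} (hFc : Continuous F) (hF1 : Integrable F)
    (hF2 : MemLp F 2) : MemLp (𝓕⁻ F) 2 := by
  set A : V → ℂ := 𝓕⁻ F with hA
  have hAcont : Continuous A :=
    VectorFourier.fourierIntegral_continuous Real.continuous_fourierChar
      (by exact continuous_inner.neg) hF1
  have hAbd : ∀ x, ‖A x‖ ≤ ∫ η, ‖F η‖ := fun x ↦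
    VectorFourier.norm_fourierIntegral_le_integral_norm _ _ _ _ _
  set G : V → ℂ := fun η ↦ (starRingEnd ℂ) (F (-η)) with hGdef
  have hGc : Continuous G := continuous_star.comp (hFc.comp continuous_neg)
  have hG1 : Integrable G := by
    refine (hF1.comp_neg.norm).mono' hGc.aestronglyMeasurable
      (Eventually.of_forall fun η ↦ ?_)
    simp [G]
  have hconj : ∀ x, (starRingEnd ℂ) (A x) = 𝓕⁻ G x := fun x ↦ conj_fourierIntegralInv F x
  have hFsq : Integrable (fun ξ ↦ ‖F ξ‖ ^ 2) :=
    (memLp_two_iff_integrable_sq_norm hFc.aestronglyMeasurable).1 hF2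
  set C2 : ℝ≥0∞ := ∫⁻ ξ, (‖F ξ‖₊ : ℝ≥0∞) ^ 2 with hC2def
  have hC2 : C2 = ENNReal.ofReal (∫ ξ, ‖F ξ‖ ^ 2) := by
    rw [ofReal_integral_eq_lintegral_ofReal hFsq
      (Eventually.of_forall fun ξ ↦ by positivity)]
    refine lintegral_congr fun ξ ↦ ?_
    rw [← ofReal_norm_eq_coe_nnnorm, ← ENNReal.ofReal_pow (norm_nonneg _)]
  have hC2top : C2 < ⊤ := by rw [hC2]; exact ENNReal.ofReal_lt_top
  have mF : Measurable F := hFc.measurable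
  have main : ∀ k : ℕ, ∫⁻ x, ENNReal.ofReal (rexp (-((k : ℝ) + 1)⁻¹ * ‖x‖ ^ 2) * ‖A x‖ ^ 2)
      ≤ 2 * C2 := by
    intro k
    set c : ℝ := (k : ℝ) + 1 with hcdef
    have hc : 0 < c := by positivity
    have mK : Measurable (K c : V → ℂ) := continuous_K.measurable
    have hAx2m : AEStronglyMeasurable (fun x : V ↦ ‖A x‖ ^ 2) (volume : Measure V) :=
      ((hAcont.norm.pow 2).aestronglyMeasurable)
    have hint : Integrable (fun x : V ↦ rexp (-c⁻¹ * ‖x‖ ^ 2) * ‖A x‖ ^ 2) := by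
      have h1 : Integrable (fun x : V ↦ ‖A x‖ ^ 2 * rexp (-c⁻¹ * ‖x‖ ^ 2)) := by
        refine (integrable_gauss_rexp (inv_pos.2 hc)).bdd_mul hAx2m (c := (∫ η, ‖F η‖) ^ 2)
          (Eventually.of_forall fun x ↦ ?_)
        have h2 : |‖A x‖ ^ 2| = ‖A x‖ ^ 2 := _root_.abs_of_nonneg (by positivity)
        rw [Real.norm_eq_abs, h2]
        exact pow_le_pow_left₀ (norm_nonneg _) (hAbd x) 2
      exact h1.congr (Eventually.of_forall fun x ↦ by ring)
    have hkey := key hF1 hG1 hc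
    have e1 : ∀ x : V, Complex.exp (-(c : ℂ)⁻¹ * ‖x‖ ^ 2) * (𝓕⁻ F x * 𝓕⁻ G x)
        = ((rexp (-c⁻¹ * ‖x‖ ^ 2) * ‖A x‖ ^ 2 : ℝ) : ℂ) := by
      intro x
      rw [← hA, ← hconj x, Complex.mul_conj']
      rw [show (-(c : ℂ)⁻¹ * (‖x‖ : ℂ) ^ 2) = ((-c⁻¹ * ‖x‖ ^ 2 : ℝ) : ℂ) by push_cast; ring,
        ← Complex.ofReal_exp]
      push_cast
      ring
    have e2 : ((∫ x, rexp (-c⁻¹ * ‖x‖ ^ 2) * ‖A x‖ ^ 2 : ℝ) : ℂ)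
        = ∫ ξ, F ξ * ∫ η, G η * K c (ξ + η) := by
      have e2' : ∫ x, ((rexp (-c⁻¹ * ‖x‖ ^ 2) * ‖A x‖ ^ 2 : ℝ) : ℂ)
          = ∫ ξ, F ξ * ∫ η, G η * K c (ξ + η) := by
        rw [← hkey]
        exact integral_congr_ae (Eventually.of_forall fun x ↦ (e1 x).symm)
      rw [← e2']
      exact (integral_ofReal).symm
    have hR0 : 0 ≤ ∫ x, rexp (-c⁻¹ * ‖x‖ ^ 2) * ‖A x‖ ^ 2 :=
      integral_nonneg fun x ↦ by positivity
    have e3 : ∫⁻ x, ENNReal.ofReal (rexp (-c⁻¹ * ‖x‖ ^ 2) * ‖A x‖ ^ 2)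
        = ENNReal.ofReal (∫ x, rexp (-c⁻¹ * ‖x‖ ^ 2) * ‖A x‖ ^ 2) :=
      (ofReal_integral_eq_lintegral_ofReal hint
        (Eventually.of_forall fun x ↦ by positivity)).symm
    have step4 : ∫⁻ ξ, ∫⁻ η, ((‖F ξ‖₊ : ℝ≥0∞) ^ 2 + (‖F (-η)‖₊ : ℝ≥0∞) ^ 2)
        * (‖K c (ξ + η)‖₊ : ℝ≥0∞) = 2 * C2 := by
      have m1 : Measurable fun η : V ↦ ((‖F (-η)‖₊ : ℝ≥0∞) ^ 2) :=
        (((mF.comp measurable_neg).nnnorm).coe_nnreal_ennreal).pow_const 2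
      have m2 : ∀ ξ : V, Measurable fun η : V ↦ (‖K c (ξ + η)‖₊ : ℝ≥0∞) := fun ξ ↦
        (((mK.comp (measurable_const_add ξ)).nnnorm).coe_nnreal_ennreal)
      have inner_eq : ∀ ξ : V, ∫⁻ η, ((‖F ξ‖₊ : ℝ≥0∞) ^ 2 + (‖F (-η)‖₊ : ℝ≥0∞) ^ 2)
          * (‖K c (ξ + η)‖₊ : ℝ≥0∞)
          = (‖F ξ‖₊ : ℝ≥0∞) ^ 2 + ∫⁻ η, (‖F (-η)‖₊ : ℝ≥0∞) ^ 2
              * (‖K c (ξ + η)‖₊ : ℝ≥0∞) := by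
        intro ξ
        have : ∀ η : V, ((‖F ξ‖₊ : ℝ≥0∞) ^ 2 + (‖F (-η)‖₊ : ℝ≥0∞) ^ 2)
            * (‖K c (ξ + η)‖₊ : ℝ≥0∞)
            = (‖F ξ‖₊ : ℝ≥0∞) ^ 2 * (‖K c (ξ + η)‖₊ : ℝ≥0∞)
              + (‖F (-η)‖₊ : ℝ≥0∞) ^ 2 * (‖K c (ξ + η)‖₊ : ℝ≥0∞) := fun η ↦ add_mul _ _ _
        rw [lintegral_congr this, lintegral_add_left ((m2 ξ).const_mul _)]
        congr 1
        rw [lintegral_const_mul' _ _ (by simp), lintegral_add_left_eq_self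
          (fun η : V ↦ (‖K c η‖₊ : ℝ≥0∞)) ξ, lintegral_nnnorm_K hc, mul_one]
      rw [lintegral_congr inner_eq, lintegral_add_left
        ((mF.nnnorm.coe_nnreal_ennreal).pow_const 2)]
      have swap : ∫⁻ ξ, ∫⁻ η, (‖F (-η)‖₊ : ℝ≥0∞) ^ 2 * (‖K c (ξ + η)‖₊ : ℝ≥0∞)
          = ∫⁻ η, ∫⁻ ξ, (‖F (-η)‖₊ : ℝ≥0∞) ^ 2 * (‖K c (ξ + η)‖₊ : ℝ≥0∞) := by
        refine lintegral_lintegral_swap ?_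
        have mm : Measurable fun p : V × V ↦ (‖F (-p.2)‖₊ : ℝ≥0∞) ^ 2
            * (‖K c (p.1 + p.2)‖₊ : ℝ≥0∞) :=
          ((((mF.comp measurable_neg).comp measurable_snd).nnnorm.coe_nnreal_ennreal).pow_const
            2).mul (((mK.comp measurable_add).nnnorm).coe_nnreal_ennreal)
        exact mm.aemeasurable
      rw [swap]
      have inner2 : ∀ η : V, ∫⁻ ξ, (‖F (-η)‖₊ : ℝ≥0∞) ^ 2 * (‖K c (ξ + η)‖₊ : ℝ≥0∞)
          = (‖F (-η)‖₊ : ℝ≥0∞) ^ 2 := by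
        intro η
        rw [lintegral_const_mul' _ _ (by simp), lintegral_add_right_eq_self
          (fun ξ : V ↦ (‖K c ξ‖₊ : ℝ≥0∞)) η, lintegral_nnnorm_K hc, mul_one]
      rw [lintegral_congr inner2]
      have negint : ∫⁻ η : V, (‖F (-η)‖₊ : ℝ≥0∞) ^ 2 = C2 :=
        (Measure.measurePreserving_neg (volume : Measure V)).lintegral_comp
          ((mF.nnnorm.coe_nnreal_ennreal).pow_const 2)
      rw [negint, hC2def, two_mul]
    rw [e3]
    calc ENNReal.ofReal (∫ x, rexp (-c⁻¹ * ‖x‖ ^ 2) * ‖A x‖ ^ 2)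
        = (‖((∫ x, rexp (-c⁻¹ * ‖x‖ ^ 2) * ‖A x‖ ^ 2 : ℝ) : ℂ)‖₊ : ℝ≥0∞) := by
          rw [← ofReal_norm_eq_coe_nnnorm, Complex.norm_real, Real.norm_eq_abs,
            _root_.abs_of_nonneg hR0]
      _ = (‖∫ ξ, F ξ * ∫ η, G η * K c (ξ + η)‖₊ : ℝ≥0∞) := by rw [e2]
      _ ≤ ∫⁻ ξ, ‖F ξ * ∫ η, G η * K c (ξ + η)‖₊ := enorm_integral_le_lintegral_enorm _
      _ ≤ ∫⁻ ξ, ∫⁻ η, ((‖F ξ‖₊ : ℝ≥0∞) ^ 2 + (‖F (-η)‖₊ : ℝ≥0∞) ^ 2)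
            * (‖K c (ξ + η)‖₊ : ℝ≥0∞) := by
          refine lintegral_mono fun ξ ↦ ?_
          rw [nnnorm_mul, ENNReal.coe_mul]
          calc ((‖F ξ‖₊ : ℝ≥0∞)) * (‖∫ η, G η * K c (ξ + η)‖₊ : ℝ≥0∞)
              ≤ (‖F ξ‖₊ : ℝ≥0∞) * ∫⁻ η, ‖G η * K c (ξ + η)‖₊ :=
                mul_le_mul_right (enorm_integral_le_lintegral_enorm _) _
            _ = ∫⁻ η, (‖F ξ‖₊ : ℝ≥0∞) * ‖G η * K c (ξ + η)‖₊ :=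
                (lintegral_const_mul' _ _ (by simp)).symm
            _ ≤ ∫⁻ η, ((‖F ξ‖₊ : ℝ≥0∞) ^ 2 + (‖F (-η)‖₊ : ℝ≥0∞) ^ 2)
                  * (‖K c (ξ + η)‖₊ : ℝ≥0∞) := by
                refine lintegral_mono fun η ↦ ?_
                rw [nnnorm_mul, ENNReal.coe_mul, ← mul_assoc]
                refine mul_le_mul_left ?_ _
                have hGF : (‖G η‖₊ : ℝ≥0∞) = (‖F (-η)‖₊ : ℝ≥0∞) := by
                  simp [hGdef]
                rw [hGF]
                exact ennreal_mul_le_sq_add_sq _ _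
      _ = 2 * C2 := step4
  have hlim : Tendsto
      (fun k : ℕ ↦ ∫⁻ x, ENNReal.ofReal (rexp (-((k : ℝ) + 1)⁻¹ * ‖x‖ ^ 2) * ‖A x‖ ^ 2))
      atTop (𝓝 (∫⁻ x, (‖A x‖₊ : ℝ≥0∞) ^ 2)) := by
    refine lintegral_tendsto_of_tendsto_of_monotone (fun k ↦ ?_) ?_ ?_
    · exact (ENNReal.continuous_ofReal.comp
        ((Real.continuous_exp.comp
          ((continuous_const.mul (continuous_norm.pow 2)) :
            Continuous fun x : V ↦ -((k : ℝ) + 1)⁻¹ * ‖x‖ ^ 2)).mul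
          (hAcont.norm.pow 2))).measurable.aemeasurable
    · refine Eventually.of_forall fun x ↦ ?_
      intro k l hkl
      apply ENNReal.ofReal_le_ofReal
      refine mul_le_mul_of_nonneg_right ?_ (by positivity)
      apply Real.exp_le_exp.2
      rw [neg_mul, neg_mul, neg_le_neg_iff]
      refine mul_le_mul_of_nonneg_right ?_ (by positivity)
      exact inv_anti₀ (by positivity) (add_le_add (Nat.cast_le.2 hkl) le_rfl)
    · refine Eventually.of_forall fun x ↦ ?_
      have h1 : Tendsto (fun k : ℕ ↦ -((k : ℝ) + 1)⁻¹ * ‖x‖ ^ 2) atTop (𝓝 0) := by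
        have h0 := tendsto_one_div_add_atTop_nhds_zero_nat (𝕜 := ℝ)
        have h0' : Tendsto (fun k : ℕ ↦ ((k : ℝ) + 1)⁻¹) atTop (𝓝 0) := by
          simpa [one_div] using h0
        simpa using (h0'.neg.mul_const (‖x‖ ^ 2))
      have h2 : Tendsto (fun k : ℕ ↦ rexp (-((k : ℝ) + 1)⁻¹ * ‖x‖ ^ 2) * ‖A x‖ ^ 2)
          atTop (𝓝 (‖A x‖ ^ 2)) := by
        have := ((Real.continuous_exp.tendsto 0).comp h1).mul_const (‖A x‖ ^ 2)
        simpa using this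
      have h3 := (ENNReal.continuous_ofReal.tendsto _).comp h2
      have : ENNReal.ofReal (‖A x‖ ^ 2) = (‖A x‖₊ : ℝ≥0∞) ^ 2 := by
        rw [← ofReal_norm_eq_coe_nnnorm, ← ENNReal.ofReal_pow (norm_nonneg _)]
      rw [← this]
      exact h3
  have hfin : ∫⁻ x, (‖A x‖₊ : ℝ≥0∞) ^ 2 ≤ 2 * C2 := le_of_tendsto' hlim main
  refine (memLp_two_iff_integrable_sq_norm hAcont.aestronglyMeasurable).2 ?_
  refine ⟨(hAcont.norm.pow 2).aestronglyMeasurable, ?_⟩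
  rw [hasFiniteIntegral_iff_norm]
  have heq : ∫⁻ x, ENNReal.ofReal ‖(‖A x‖ ^ 2 : ℝ)‖ = ∫⁻ x, (‖A x‖₊ : ℝ≥0∞) ^ 2 := by
    refine lintegral_congr fun x ↦ ?_
    rw [Real.norm_of_nonneg (by positivity), ← ofReal_norm_eq_coe_nnnorm,
      ← ENNReal.ofReal_pow (norm_nonneg _)]
  rw [heq]
  exact lt_of_le_of_lt hfin (by
    have : (2 : ℝ≥0∞) * C2 < ⊤ := ENNReal.mul_lt_top (by simp) hC2top
    exact this)

theorem pairing {F G : V → ℂ} (hFc : Continuous F) (hF1 : Integrable F) (hF2 : MemLp F 2)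
    (hGc : Continuous G) (hG1 : Integrable G) (hG2 : MemLp G 2)
    {M : ℝ} (hGb : ∀ ξ, ‖G ξ‖ ≤ M) :
    ∫ x, 𝓕⁻ F x * 𝓕⁻ G x = ∫ ξ, F ξ * G (-ξ) := by
  have hA2 := memL2_fourierIntegralInv hFc hF1 hF2
  have hB2 := memL2_fourierIntegralInv hGc hG1 hG2
  have hAB : Integrable (fun x ↦ 𝓕⁻ F x * 𝓕⁻ G x) := by
    have h := hB2.smul (φ := 𝓕⁻ F) hA2 (r := 1)
    rw [memLp_one_iff_integrable] at h
    exact h.congr (Eventually.of_forall fun x ↦ by simp [Pi.smul_apply, smul_eq_mul])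
  have T1 := Real.tendsto_integral_cexp_sq_smul hAB
  have T1' : Tendsto (fun c : ℝ ↦ ∫ ξ, F ξ * ∫ η, G η * K c (ξ + η)) atTop
      (𝓝 (∫ x, 𝓕⁻ F x * 𝓕⁻ G x)) := by
    refine T1.congr' ?_
    filter_upwards [Ioi_mem_atTop 0] with c (hc : 0 < c)
    rw [← key hF1 hG1 hc]
    refine integral_congr_ae (Eventually.of_forall fun x ↦ ?_)
    dsimp only
    rw [smul_eq_mul, Complex.ofReal_inv]
  have T2 : Tendsto (fun c : ℝ ↦ ∫ ξ, F ξ * ∫ η, G η * K c (ξ + η)) atTop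
      (𝓝 (∫ ξ, F ξ * G (-ξ))) := by
    refine tendsto_integral_filter_of_dominated_convergence (bound := fun ξ ↦ ‖F ξ‖ * M)
      ?_ ?_ ?_ ?_
    · filter_upwards [Ioi_mem_atTop 0] with c (hc : 0 < c)
      have hgG : Integrable (fun x : V ↦ Complex.exp (-(c : ℂ)⁻¹ * ‖x‖ ^ 2) * 𝓕 G x) := by
        have h𝓕Gc : Continuous (𝓕 G) :=
          VectorFourier.fourierIntegral_continuous Real.continuous_fourierChar
            continuous_inner hG1
        have := integrable_gauss_mul_bdd hc h𝓕Gc.aestronglyMeasurable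
          (M := ∫ η, ‖G η‖)
          (fun x ↦ VectorFourier.norm_fourierIntegral_le_integral_norm _ _ _ _ _)
        exact this.congr (Eventually.of_forall fun x ↦ by ring)
      have hJc : Continuous (fun ξ : V ↦ ∫ η, G η * K c (ξ + η)) := by
        have hcont : Continuous (𝓕 (fun x : V ↦ Complex.exp (-(c : ℂ)⁻¹ * ‖x‖ ^ 2) * 𝓕 G x)) :=
          VectorFourier.fourierIntegral_continuous Real.continuous_fourierChar
            continuous_inner hgG
        exact hcont.congr fun ξ ↦ key2 hG1 hc ξ
      exact (hFc.mul hJc).aestronglyMeasurable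
    · filter_upwards [Ioi_mem_atTop 0] with c (hc : 0 < c)
      refine Eventually.of_forall fun ξ ↦ ?_
      rw [norm_mul]
      exact mul_le_mul_of_nonneg_left (norm_integral_mul_K_le hG1 hGb hc ξ) (norm_nonneg _)
    · exact hF1.norm.mul_const M
    · refine Eventually.of_forall fun ξ ↦ ?_
      apply Tendsto.const_mul
      have hGneg : Integrable (fun w : V ↦ G (-w)) := hG1.comp_neg
      have h := Real.tendsto_integral_gaussian_smul' hGneg (v := ξ)
        ((hGc.comp continuous_neg).continuousAt)
      refine Tendsto.congr' ?_ h
      filter_upwards [Ioi_mem_atTop 0] with c (hc : 0 < c)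
      have hsub : (∫ η, G η * K c (ξ + η)) = ∫ w, G (-w) * K c (ξ - w) := by
        rw [← integral_neg_eq_self (fun w ↦ G (-w) * K c (ξ - w)) volume]
        refine integral_congr_ae (Eventually.of_forall fun η ↦ ?_)
        dsimp only
        rw [neg_neg, sub_neg_eq_add]
      rw [hsub]
      refine integral_congr_ae (Eventually.of_forall fun w ↦ ?_)
      dsimp only
      rw [smul_eq_mul, K]
      ring
  exact tendsto_nhds_unique T1' T2

section Schwartz

lemma rpow_le_one_add_sq {r : ℝ} (x : ℝ) (hr : 0 < r) (hr2 : 2 * r ≤ 2) (hx : 0 ≤ x) :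
    x ^ (2 * r) ≤ 1 + x ^ 2 := by
  rcases le_total x 1 with h | h
  · calc x ^ (2 * r) ≤ 1 := Real.rpow_le_one hx h (by positivity)
      _ ≤ 1 + x ^ 2 := by nlinarith [sq_nonneg x]
  · calc x ^ (2 * r) ≤ x ^ (2 : ℝ) :=
        Real.rpow_le_rpow_of_exponent_le h hr2
      _ = x ^ 2 := by
        rw [show (2 : ℝ) = ((2 : ℕ) : ℝ) by norm_num, Real.rpow_natCast]
      _ ≤ 1 + x ^ 2 := by linarith

variable {r : ℝ}

lemma symbol_continuous (hr : 0 < r) (ψ : SchwartzMap V ℂ) :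
    Continuous fun ξ : V ↦ ((‖ξ‖ ^ (2 * r) : ℝ) : ℂ) * ψ ξ := by
  refine (Complex.continuous_ofReal.comp ?_).mul ψ.continuous
  have h : Continuous fun u : ℝ ↦ u ^ (2 * r) := by
    rw [continuous_iff_continuousAt]
    intro x
    exact Real.continuousAt_rpow_const x _ (Or.inr (by positivity))
  exact h.comp continuous_norm

lemma symbol_bound (hr : 0 < r) (hr2 : 2 * r ≤ 2) (ψ : SchwartzMap V ℂ) (ξ : V) :
    ‖((‖ξ‖ ^ (2 * r) : ℝ) : ℂ) * ψ ξ‖ ≤ (1 + ‖ξ‖ ^ 2) * ‖ψ ξ‖ := by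
  rw [norm_mul, Complex.norm_real, Real.norm_eq_abs, _root_.abs_of_nonneg (by positivity)]
  exact mul_le_mul_of_nonneg_right (rpow_le_one_add_sq ‖ξ‖ hr hr2 (norm_nonneg _))
    (norm_nonneg _)

lemma symbol_integrable (hr : 0 < r) (hr2 : 2 * r ≤ 2) (ψ : SchwartzMap V ℂ) :
    Integrable (fun ξ : V ↦ ((‖ξ‖ ^ (2 * r) : ℝ) : ℂ) * ψ ξ) := by
  have h0 := ψ.integrable_pow_mul (volume : Measure V) 0
  have h2 := ψ.integrable_pow_mul (volume : Measure V) 2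
  have h1 : Integrable (fun ξ : V ↦ (1 + ‖ξ‖ ^ 2) * ‖ψ ξ‖) := by
    have heq : (fun ξ : V ↦ (1 + ‖ξ‖ ^ 2) * ‖ψ ξ‖)
        = fun ξ : V ↦ ‖ξ‖ ^ 0 * ‖ψ ξ‖ + ‖ξ‖ ^ 2 * ‖ψ ξ‖ := by
      funext ξ
      simp [pow_zero]
      ring
    rw [heq]
    exact h0.add h2
  exact h1.mono' (symbol_continuous hr ψ).aestronglyMeasurable
    (Eventually.of_forall fun ξ ↦ symbol_bound hr hr2 ψ ξ)

lemma symbol_memL2 (hr : 0 < r) (hr2 : 2 * r ≤ 2) (ψ : SchwartzMap V ℂ) :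
    MemLp (fun ξ : V ↦ ((‖ξ‖ ^ (2 * r) : ℝ) : ℂ) * ψ ξ) 2 := by
  refine (memLp_two_iff_integrable_sq_norm
    (symbol_continuous hr ψ).aestronglyMeasurable).2 ?_
  obtain ⟨C0, hC0pos, hC0⟩ := ψ.decay 0 0
  have hψbd : ∀ ξ : V, ‖ψ ξ‖ ≤ C0 := fun ξ ↦ by
    simpa [norm_iteratedFDeriv_zero] using hC0 ξ
  have h1 : Integrable (fun ξ : V ↦ C0 * ((1 + ‖ξ‖ ^ 2) ^ 2 * ‖ψ ξ‖)) := by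
    have h0 := ψ.integrable_pow_mul (volume : Measure V) 0
    have h2 := ψ.integrable_pow_mul (volume : Measure V) 2
    have h4 := ψ.integrable_pow_mul (volume : Measure V) 4
    have hsum : Integrable (fun ξ : V ↦ (1 + ‖ξ‖ ^ 2) ^ 2 * ‖ψ ξ‖) := by
      refine ((h0.add (h2.const_mul 2)).add h4).congr (Eventually.of_forall fun ξ ↦ ?_)
      simp only [Pi.add_apply]
      rw [pow_zero, one_mul]
      ring
    exact hsum.const_mul C0
  refine h1.mono' (((symbol_continuous hr ψ).norm.pow 2).aestronglyMeasurable)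
    (Eventually.of_forall fun ξ ↦ ?_)
  rw [Real.norm_eq_abs, _root_.abs_of_nonneg (by positivity)]
  calc ‖((‖ξ‖ ^ (2 * r) : ℝ) : ℂ) * ψ ξ‖ ^ 2 ≤ ((1 + ‖ξ‖ ^ 2) * ‖ψ ξ‖) ^ 2 :=
        pow_le_pow_left₀ (norm_nonneg _) (symbol_bound hr hr2 ψ ξ) 2
    _ = (1 + ‖ξ‖ ^ 2) ^ 2 * (‖ψ ξ‖ * ‖ψ ξ‖) := by ring
    _ ≤ (1 + ‖ξ‖ ^ 2) ^ 2 * (C0 * ‖ψ ξ‖) := by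
        exact mul_le_mul_of_nonneg_left
          (mul_le_mul_of_nonneg_right (hψbd ξ) (norm_nonneg _)) (by positivity)
    _ = C0 * ((1 + ‖ξ‖ ^ 2) ^ 2 * ‖ψ ξ‖) := by ring

lemma symbol_bdd (hr : 0 < r) (hr2 : 2 * r ≤ 2) (ψ : SchwartzMap V ℂ) :
    ∃ M : ℝ, ∀ ξ : V, ‖((‖ξ‖ ^ (2 * r) : ℝ) : ℂ) * ψ ξ‖ ≤ M := by
  obtain ⟨C0, _, hC0⟩ := ψ.decay 0 0
  obtain ⟨C2, _, hC2⟩ := ψ.decay 2 0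
  refine ⟨C0 + C2, fun ξ ↦ ?_⟩
  refine (symbol_bound hr hr2 ψ ξ).trans ?_
  have h0 : ‖ψ ξ‖ ≤ C0 := by simpa [norm_iteratedFDeriv_zero] using hC0 ξ
  have h2 : ‖ξ‖ ^ 2 * ‖ψ ξ‖ ≤ C2 := by simpa [norm_iteratedFDeriv_zero] using hC2 ξ
  nlinarith [norm_nonneg (ψ ξ), sq_nonneg ‖ξ‖]

lemma schwartz_memL2 (ψ : SchwartzMap V ℂ) : MemLp (fun x : V ↦ ψ x) 2 := by
  refine (memLp_two_iff_integrable_sq_norm ψ.continuous.aestronglyMeasurable).2 ?_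
  obtain ⟨C0, _, hC0⟩ := ψ.decay 0 0
  have hψbd : ∀ ξ : V, ‖ψ ξ‖ ≤ C0 := fun ξ ↦ by
    simpa [norm_iteratedFDeriv_zero] using hC0 ξ
  refine ((ψ.integrable.norm.const_mul C0)).mono'
    ((ψ.continuous.norm.pow 2).aestronglyMeasurable) (Eventually.of_forall fun ξ ↦ ?_)
  rw [Real.norm_eq_abs, _root_.abs_of_nonneg (by positivity), sq]
  exact mul_le_mul_of_nonneg_right (hψbd ξ) (norm_nonneg _)

lemma schwartz_bdd (ψ : SchwartzMap V ℂ) : ∃ M : ℝ, ∀ ξ : V, ‖ψ ξ‖ ≤ M := by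
  obtain ⟨C0, _, hC0⟩ := ψ.decay 0 0
  exact ⟨C0, fun ξ ↦ by simpa [norm_iteratedFDeriv_zero] using hC0 ξ⟩

end Schwartz

end FracLapAux

/-- Semigroup property `(-Δ)^s ∘ (-Δ)^t = (-Δ)^{s+t}` on Schwartz functions, as
tempered distributions: tested against any Schwartz function `φ`, the action of
`(-Δ)^s((-Δ)^t u)` (defined by duality, moving `(-Δ)^s` onto the test function)
agrees with that of `(-Δ)^{s+t} u`. -/
theorem stmt_3 {n : ℕ} (s t : ℝ) (hs : 0 < s) (ht : 0 < t) (hst : s + t ≤ 1)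
    (u : SchwartzMap (EuclideanSpace ℝ (Fin n)) ℂ) :
    ∀ φ : SchwartzMap (EuclideanSpace ℝ (Fin n)) ℂ,
      ∫ x, fracLap t u x * fracLap s φ x = ∫ x, fracLap (s + t) u x * φ x := by
  intro φ
  have ht2 : 2 * t ≤ 2 := by linarith
  have hs2 : 2 * s ≤ 2 := by linarith
  have hst0 : 0 < s + t := by linarith
  have hst2 : 2 * (s + t) ≤ 2 := by linarith
  let uhat : SchwartzMap (EuclideanSpace ℝ (Fin n)) ℂ := SchwartzMap.fourierTransformCLM ℂ u
  let phihat : SchwartzMap (EuclideanSpace ℝ (Fin n)) ℂ := SchwartzMap.fourierTransformCLM ℂ φ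
  have hU : ⇑uhat = 𝓕 (⇑u) := SchwartzMap.fourier_coe u
  have hΦ : ⇑phihat = 𝓕 (⇑φ) := SchwartzMap.fourier_coe φ
  set F : EuclideanSpace ℝ (Fin n) → ℂ :=
    fun ξ ↦ ((‖ξ‖ ^ (2 * t) : ℝ) : ℂ) * uhat ξ with hFdef
  set G : EuclideanSpace ℝ (Fin n) → ℂ :=
    fun ξ ↦ ((‖ξ‖ ^ (2 * s) : ℝ) : ℂ) * phihat ξ with hGdef
  set H : EuclideanSpace ℝ (Fin n) → ℂ :=
    fun ξ ↦ ((‖ξ‖ ^ (2 * (s + t)) : ℝ) : ℂ) * uhat ξ with hHdef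
  have hfracF : ∀ x, fracLap t u x = 𝓕⁻ F x := by
    intro x
    rw [fracLap, hFdef, hU]
  have hfracG : ∀ x, fracLap s φ x = 𝓕⁻ G x := by
    intro x
    rw [fracLap, hGdef, hΦ]
  have hfracH : ∀ x, fracLap (s + t) u x = 𝓕⁻ H x := by
    intro x
    rw [fracLap, hHdef, hU]
  have hFc : Continuous F := FracLapAux.symbol_continuous ht uhat
  have hF1 : Integrable F := FracLapAux.symbol_integrable ht ht2 uhat
  have hF2 : MemLp F 2 := FracLapAux.symbol_memL2 ht ht2 uhat
  have hGc : Continuous G := FracLapAux.symbol_continuous hs phihat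
  have hG1 : Integrable G := FracLapAux.symbol_integrable hs hs2 phihat
  have hG2 : MemLp G 2 := FracLapAux.symbol_memL2 hs hs2 phihat
  obtain ⟨M, hGb⟩ := FracLapAux.symbol_bdd hs hs2 phihat
  have hHc : Continuous H := FracLapAux.symbol_continuous hst0 uhat
  have hH1 : Integrable H := FracLapAux.symbol_integrable hst0 hst2 uhat
  have hH2 : MemLp H 2 := FracLapAux.symbol_memL2 hst0 hst2 uhat
  have hΦc : Continuous (⇑phihat) := phihat.continuous
  have hΦ1 : Integrable (⇑phihat) := phihat.integrable
  have hΦ2 : MemLp (⇑phihat) 2 := FracLapAux.schwartz_memL2 phihat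
  obtain ⟨M', hΦb⟩ := FracLapAux.schwartz_bdd phihat
  have hLHS : ∫ x, fracLap t u x * fracLap s φ x = ∫ ξ, F ξ * G (-ξ) := by
    rw [integral_congr_ae (Eventually.of_forall fun x ↦ by rw [hfracF x, hfracG x])]
    exact FracLapAux.pairing hFc hF1 hF2 hGc hG1 hG2 hGb
  have hφinv : ∀ x, φ x = 𝓕⁻ (⇑phihat) x := by
    intro x
    have hint : Integrable (𝓕 (⇑φ)) := by rw [← hΦ]; exact hΦ1
    have h := Continuous.fourierInv_fourier_eq φ.continuous φ.integrable hint
    rw [hΦ]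
    exact (congrFun h x).symm
  have hRHS : ∫ x, fracLap (s + t) u x * φ x = ∫ ξ, H ξ * phihat (-ξ) := by
    rw [integral_congr_ae (Eventually.of_forall fun x ↦ by rw [hfracH x, hφinv x])]
    exact FracLapAux.pairing hHc hH1 hH2 hΦc hΦ1 hΦ2 hΦb
  rw [hLHS, hRHS]
  refine integral_congr_ae (Eventually.of_forall fun ξ ↦ ?_)
  rw [hFdef, hGdef, hHdef]
  dsimp only
  rw [norm_neg]
  rcases eq_or_ne ξ 0 with h0 | h0
  · subst h0
    rw [norm_zero, Real.zero_rpow (by positivity), Real.zero_rpow (by positivity),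
      Real.zero_rpow (by positivity)]
    simp
  · have hpos : 0 < ‖ξ‖ := norm_pos_iff.2 h0
    rw [show 2 * (s + t) = 2 * s + 2 * t by ring, Real.rpow_add hpos]
    push_cast
    ring
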